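/- Suppose Q_k = (1/k)(Σ_{i=0}^{k-1} T Q_i + Σ_{i=0}^{k-1} e_i), T is a β-contraction in sup norm with fixed point Q*, and ‖Q* − Q_i‖_∞ ≤ β^i · 2V_max for all i. Then ‖Q* − Q_k‖_∞ ≤ 2βV_max/(k(1−β)) + (1/k)‖Σ_{i=0}^{k-1} e_i‖_∞. -/
import Mathlib


/-- Lemma 3 of the paper: if `Q_k = (1/k)(∑ T Q_i + ∑ e_i)`, `T` is a `β`-contraction with
fixed point `Q*`, and `‖Q* - Q_i‖ ≤ β^i · 2 V_max`, then
`‖Q* - Q_k‖ ≤ 2 β V_max / (k (1-β)) + (1/k) ‖∑ e_i‖`. -/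
theorem stmt_3 {Z : Type*} (β Vmax : ℝ) (hβ0 : 0 < β) (hβ1 : β < 1) (hV : 0 < Vmax)
    (T : (Z → ℝ) → (Z → ℝ)) (Qstar : Z → ℝ) (Q : ℕ → Z → ℝ) (e : ℕ → Z → ℝ)
    (hcontr : ∀ (f g : Z → ℝ) (C : ℝ), (∀ z, |f z - g z| ≤ C) → ∀ z, |T f z - T g z| ≤ β * C)
    (hfix : T Qstar = Qstar)
    (hconv : ∀ i : ℕ, ∀ z, |Qstar z - Q i z| ≤ β ^ i * (2 * Vmax))
    (k : ℕ) (hk : 1 ≤ k)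
    (hQk : ∀ z, Q k z =
      (1 / (k : ℝ)) * (∑ i ∈ Finset.range k, T (Q i) z + ∑ i ∈ Finset.range k, e i z))
    (E : ℝ) (hE : ∀ z, |∑ i ∈ Finset.range k, e i z| ≤ E) :
    ∀ z, |Qstar z - Q k z| ≤ 2 * β * Vmax / ((k : ℝ) * (1 - β)) + (1 / (k : ℝ)) * E := by
  intro z
  have hkpos : (0:ℝ) < k := by exact_mod_cast hk
  have hkne : (k:ℝ) ≠ 0 := ne_of_gt hkpos
  have key : ∀ i, |Qstar z - T (Q i) z| ≤ β ^ (i+1) * (2 * Vmax) := by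
    intro i
    have := hcontr Qstar (Q i) (β ^ i * (2 * Vmax)) (hconv i) z
    rw [hfix] at this
    calc |Qstar z - T (Q i) z| ≤ β * (β ^ i * (2 * Vmax)) := this
      _ = β ^ (i+1) * (2 * Vmax) := by ring
  have hdecomp : Qstar z - Q k z =
      (1 / (k : ℝ)) * (∑ i ∈ Finset.range k, (Qstar z - T (Q i) z))
      - (1 / (k : ℝ)) * ∑ i ∈ Finset.range k, e i z := by
    rw [hQk z, Finset.sum_sub_distrib, Finset.sum_const, Finset.card_range]
    field_simp
    ring
  have h1 : |∑ i ∈ Finset.range k, (Qstar z - T (Q i) z)| ≤ 2 * β * Vmax / (1 - β) := by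
    calc |∑ i ∈ Finset.range k, (Qstar z - T (Q i) z)|
        ≤ ∑ i ∈ Finset.range k, β ^ (i+1) * (2 * Vmax) :=
          Finset.abs_sum_le_sum_abs _ _ |>.trans (Finset.sum_le_sum fun i _ => key i)
      _ = β * (2 * Vmax) * ∑ i ∈ Finset.range k, β ^ i := by
          rw [Finset.mul_sum]; congr 1; ext i; ring
      _ ≤ β * (2 * Vmax) * (1 / (1 - β)) := by
          apply mul_le_mul_of_nonneg_left
          · have h1β : (0:ℝ) < 1 - β := by linarith
            calc ∑ i ∈ Finset.range k, β ^ i = (1 - β ^ k) / (1 - β) := by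
                  rw [geom_sum_eq (ne_of_lt hβ1)]
                  rw [div_eq_div_iff (by linarith) (ne_of_gt h1β)]
                  ring
              _ ≤ 1 / (1 - β) := by
                  gcongr; nlinarith [pow_pos hβ0 k]
          · positivity
      _ = 2 * β * Vmax / (1 - β) := by ring
  calc |Qstar z - Q k z|
      ≤ (1 / (k : ℝ)) * |∑ i ∈ Finset.range k, (Qstar z - T (Q i) z)|
        + (1 / (k : ℝ)) * |∑ i ∈ Finset.range k, e i z| := by
        rw [hdecomp]
        refine (abs_sub _ _).trans ?_
        rw [abs_mul, abs_mul, abs_of_pos (by positivity : (0:ℝ) < 1 / (k:ℝ))]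
    _ ≤ (1 / (k : ℝ)) * (2 * β * Vmax / (1 - β)) + (1 / (k : ℝ)) * E := by
        gcongr
        exact hE z
    _ = 2 * β * Vmax / ((k : ℝ) * (1 - β)) + (1 / (k : ℝ)) * E := by
        field_simp
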